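/- arXiv:2312.06906 — 2 statements merged into one kernel-verified Lean document; each statement's English description precedes it below -/
import Mathlib

section
/- Let u ∈ {1,…,m}. Then u is periodic with respect to L (i.e., |exp(iτL)_{u,u}| = 1 for some τ > 0) if and only if every element of σ_u(L_X) is rational. Moreover, if u is periodic with respect to L, then u is periodic with respect to L_X. -/
open Matrix Complex

/-- Transition matrix `exp(itM)` of the continuous quantum walk whose Hamiltonian is the
real symmetric matrix `M` (the matrix exponential is taken over `ℂ`). -/
noncomputable def transU {N : Type*} [Fintype N] [DecidableEq N]
    (M : Matrix N N ℝ) (t : ℝ) : Matrix N N ℂ :=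
  NormedSpace.exp ((Complex.I * (t : ℂ)) • M.map (fun x : ℝ => (x : ℂ)))

/-- Laplacian matrix of the join `X ∨ Y` of two weighted graphs with Laplacian
matrices `LX` and `LY`. -/
noncomputable def joinL (m n : ℕ) (LX : Matrix (Fin m) (Fin m) ℝ)
    (LY : Matrix (Fin n) (Fin n) ℝ) :
    Matrix (Fin m ⊕ Fin n) (Fin m ⊕ Fin n) ℝ :=
  Matrix.fromBlocks (LX + (n : ℝ) • (1 : Matrix (Fin m) (Fin m) ℝ))
    (-(Matrix.of fun _ _ => (1 : ℝ)))
    (-(Matrix.of fun _ _ => (1 : ℝ)))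
    (LY + (m : ℝ) • (1 : Matrix (Fin n) (Fin n) ℝ))

/-- Adjacency matrix of the join `X ∨ Y` of two weighted graphs with adjacency
matrices `AX` and `AY`. -/
noncomputable def joinA (m n : ℕ) (AX : Matrix (Fin m) (Fin m) ℝ)
    (AY : Matrix (Fin n) (Fin n) ℝ) :
    Matrix (Fin m ⊕ Fin n) (Fin m ⊕ Fin n) ℝ :=
  Matrix.fromBlocks AX (Matrix.of fun _ _ => (1 : ℝ))
    (Matrix.of fun _ _ => (1 : ℝ)) AY

/-- `lam` is an eigenvalue of the matrix `M`. -/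
def IsEigenvalue {N : Type*} [Fintype N] (M : Matrix N N ℝ) (lam : ℝ) : Prop :=
  ∃ w : N → ℝ, w ≠ 0 ∧ M.mulVec w = lam • w

/-- The eigenvalue support `σ_u(M)` of the vertex `u`: all eigenvalues `lam` of `M` having
an eigenvector `w` with `w u ≠ 0`. -/
def eigSupport {N : Type*} [Fintype N] (M : Matrix N N ℝ) (u : N) : Set ℝ :=
  {lam | ∃ w : N → ℝ, w ≠ 0 ∧ M.mulVec w = lam • w ∧ w u ≠ 0}

/-- Vertices `u` and `v` are strongly cospectral with respect to `M`: for each eigenvalue,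
either all eigenvectors have equal `u`,`v` entries, or all have opposite `u`,`v` entries. -/
def StronglyCospectral {N : Type*} [Fintype N] (M : Matrix N N ℝ) (u v : N) : Prop :=
  ∀ lam : ℝ, IsEigenvalue M lam →
    (∀ w : N → ℝ, M.mulVec w = lam • w → w u = w v) ∨
    (∀ w : N → ℝ, M.mulVec w = lam • w → w u = -(w v))

/-- `σ_{uv}^-(M)`: eigenvalues in the support of `u` all of whose eigenvectors `w`
satisfy `w u = - w v`. -/
def sigmaMinus {N : Type*} [Fintype N] (M : Matrix N N ℝ) (u v : N) : Set ℝ :=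
  {lam | lam ∈ eigSupport M u ∧ ∀ w : N → ℝ, M.mulVec w = lam • w → w u = -(w v)}

/-- The vertex `u` is periodic with respect to `M`. -/
noncomputable def PeriodicAt {N : Type*} [Fintype N] [DecidableEq N]
    (M : Matrix N N ℝ) (u : N) : Prop :=
  ∃ τ : ℝ, 0 < τ ∧ ‖transU M τ u u‖ = 1

/-- Perfect state transfer occurs between vertices `u` and `v` with respect to `M`. -/
noncomputable def HasPST {N : Type*} [Fintype N] [DecidableEq N]
    (M : Matrix N N ℝ) (u v : N) : Prop :=
  ∃ τ : ℝ, 0 < τ ∧ ‖transU M τ u v‖ = 1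

/-!
For a real symmetric `M` with orthonormal eigenvectors `φ_k` and eigenvalues `λ_k`,
`exp(iτM)_{uu} = ∑_k φ_k(u)² e^{iτλ_k}` is a convex combination of unit complex numbers, so it
has modulus one only if all phases `e^{iτλ}`, `λ ∈ σ_u(M)`, coincide; conversely, if `σ_u(M)`
consists of rationals, `τ = 2π·(common denominator)` makes every phase equal to one.

In the join, `0` (eigenvector `1`) and `m + n` (eigenvector `(n, …, n, -m, …, -m)`) always lie in
`σ_u(L)`; every other eigenvector of `L` sums to zero on `Y`, so `σ_u(L) \ {0, m + n}` is the
shift by `n` of `σ_u(L_X) \ {0}`. A period `τ` of `u` thus puts `τ(m + n)` and `τ(λ + n)` in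
`2πℤ`, which makes `λ` rational.
-/

theorem eq_sum_smul_of_norm_sum_smul_eq_one {E ι : Type*} [NormedAddCommGroup E]
    [InnerProductSpace ℝ E] [Fintype ι] {p : ι → ℝ} {z : ι → E} (hp : ∀ i, 0 ≤ p i)
    (hp1 : ∑ i, p i = 1) (hz : ∀ i, ‖z i‖ ≤ 1) (hS : ‖∑ i, p i • z i‖ = 1) {i : ι}
    (hi : p i ≠ 0) : z i = ∑ j, p j • z j := by
  set S := ∑ j, p j • z j
  have hvar : ∑ j, p j * ‖z j - S‖ ^ 2 = ∑ j, p j * ‖z j‖ ^ 2 - ‖S‖ ^ 2 := by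
    have hinner : ∑ j, p j * inner ℝ (z j) S = ‖S‖ ^ 2 := by
      rw [← real_inner_self_eq_norm_sq]
      simp only [S, sum_inner, real_inner_smul_left]
    simp_rw [norm_sub_sq_real, mul_add, mul_sub, Finset.sum_add_distrib, Finset.sum_sub_distrib,
      ← Finset.sum_mul, hp1, mul_left_comm _ (2 : ℝ), ← Finset.mul_sum, hinner]
    ring
  have hle : ∑ j, p j * ‖z j - S‖ ^ 2 ≤ 0 := by
    have : ∑ j, p j * ‖z j‖ ^ 2 ≤ ∑ j, p j := Finset.sum_le_sum fun j _ =>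
      mul_le_of_le_one_right (hp j) (pow_le_one₀ (norm_nonneg _) (hz j))
    rw [hvar, hS]
    linarith
  have hnonneg : ∀ j, 0 ≤ p j * ‖z j - S‖ ^ 2 := fun j => mul_nonneg (hp j) (sq_nonneg _)
  have hterm := (Finset.sum_eq_zero_iff_of_nonneg fun j _ => hnonneg j).mp
    (le_antisymm hle (Finset.sum_nonneg fun j _ => hnonneg j)) i (Finset.mem_univ i)
  simpa [hi, sub_eq_zero] using hterm

theorem exists_nat_mul_eq_int_of_finite {S : Set ℝ} (hS : S.Finite)
    (hrat : ∀ x ∈ S, ∃ q : ℚ, x = q) : ∃ D : ℕ, 0 < D ∧ ∀ x ∈ S, ∃ z : ℤ, (D : ℝ) * x = z := by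
  have hT : ((↑) ⁻¹' S : Set ℚ).Finite := hS.preimage Rat.cast_injective.injOn
  refine ⟨∏ q ∈ hT.toFinset, q.den, Finset.prod_pos fun q _ => q.pos, fun x hx => ?_⟩
  obtain ⟨q, rfl⟩ := hrat x hx
  obtain ⟨t, ht⟩ := Finset.dvd_prod_of_mem (fun q : ℚ => q.den) (hT.mem_toFinset.mpr hx)
  refine ⟨q.num * t, ?_⟩
  have hq : (q : ℝ) * q.den = q.num := by exact_mod_cast Rat.mul_den_eq_num q
  rw [ht]
  push_cast
  linear_combination (t : ℝ) * hq

theorem Complex.exp_ofReal_mul_I_eq_one_iff {x : ℝ} :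
    exp (x * I) = 1 ↔ ∃ z : ℤ, x = 2 * Real.pi * z := by
  rw [exp_eq_one_iff]
  refine exists_congr fun z => ?_
  rw [← ofReal_inj]
  push_cast
  constructor <;> intro h
  · linear_combination (-I) * h + (x - 2 * Real.pi * z) * I_sq
  · linear_combination I * h

theorem exists_rat_eq_of_exp_mul_I_eq_one {τ x y : ℝ} {q : ℚ} (hτ : τ ≠ 0) (hyq : y = q)
    (hy : y ≠ 0) (hτx : Complex.exp ((τ * x : ℝ) * Complex.I) = 1)
    (hτy : Complex.exp ((τ * y : ℝ) * Complex.I) = 1) : ∃ r : ℚ, x = r := by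
  obtain ⟨b, hb⟩ := Complex.exp_ofReal_mul_I_eq_one_iff.mp hτx
  obtain ⟨a, ha⟩ := Complex.exp_ofReal_mul_I_eq_one_iff.mp hτy
  have ha0 : (a : ℝ) ≠ 0 := by
    rintro h
    rw [h, mul_zero] at ha
    exact mul_ne_zero hτ hy ha
  refine ⟨b * q / a, ?_⟩
  push_cast
  rw [← hyq, eq_div_iff ha0]
  apply mul_left_cancel₀ hτ
  linear_combination (a : ℝ) * hb - (b : ℝ) * ha

theorem Matrix.IsSymm.eq_of_dotProduct_ne_zero {N R : Type*} [Fintype N] [CommRing R] [IsDomain R]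
    {A : Matrix N N R} (hA : A.IsSymm) {v w : N → R} {a b : R} (hv : A *ᵥ v = a • v)
    (hw : A *ᵥ w = b • w) (hvw : v ⬝ᵥ w ≠ 0) : a = b := by
  have h : a * (v ⬝ᵥ w) = b * (v ⬝ᵥ w) := by
    rw [← smul_eq_mul, ← smul_dotProduct, ← hv, dotProduct_comm, dotProduct_mulVec,
      ← mulVec_transpose, hA.eq, hw, smul_dotProduct, dotProduct_comm, smul_eq_mul]
  exact mul_right_cancel₀ hvw h

namespace Matrix.IsHermitian

variable {N : Type*} [Fintype N] [DecidableEq N] {M : Matrix N N ℝ} (hM : M.IsHermitian)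
include hM

theorem sum_eigenvectorBasis_apply_sq (u : N) : ∑ k, hM.eigenvectorBasis k u ^ 2 = 1 := by
  simpa [Matrix.mul_apply, sq] using
    congrFun (congrFun (Unitary.coe_mul_star_self hM.eigenvectorUnitary) u) u

theorem apply_eq_sum_eigenvectorBasis (w : N → ℝ) (u : N) :
    w u = ∑ k, hM.eigenvectorBasis k u * (⇑(hM.eigenvectorBasis k) ⬝ᵥ w) := by
  have hw : w = (hM.eigenvectorUnitary : Matrix N N ℝ) *ᵥ
      (star (hM.eigenvectorUnitary : Matrix N N ℝ) *ᵥ w) := by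
    rw [mulVec_mulVec, ← Unitary.coe_star, Unitary.coe_mul_star_self, one_mulVec]
  conv_lhs => rw [hw]
  simp [mulVec, dotProduct]

theorem mem_eigSupport_iff {u : N} {lam : ℝ} :
    lam ∈ eigSupport M u ↔ ∃ k, hM.eigenvalues k = lam ∧ hM.eigenvectorBasis k u ≠ 0 := by
  constructor
  · rintro ⟨w, -, hw, hwu⟩
    rw [hM.apply_eq_sum_eigenvectorBasis w u] at hwu
    obtain ⟨k, -, hk⟩ := Finset.exists_ne_zero_of_sum_ne_zero hwu
    exact ⟨k, (isHermitian_iff_isSymm.mp hM).eq_of_dotProduct_ne_zero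
      (hM.mulVec_eigenvectorBasis k) hw (right_ne_zero_of_mul hk), left_ne_zero_of_mul hk⟩
  · rintro ⟨k, rfl, hk⟩
    exact ⟨_, fun h => hk (congrFun h u), hM.mulVec_eigenvectorBasis k, hk⟩

theorem eigSupport_finite (u : N) : (eigSupport M u).Finite :=
  (Set.finite_range hM.eigenvalues).subset fun _ h =>
    let ⟨k, hk, _⟩ := hM.mem_eigSupport_iff.mp h
    ⟨k, hk⟩

theorem eq_eigenvectorUnitary_mul_diagonal_mul_star :
    M = (hM.eigenvectorUnitary : Matrix N N ℝ) * diagonal hM.eigenvalues *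
      star (hM.eigenvectorUnitary : Matrix N N ℝ) := by
  conv_lhs => rw [hM.spectral_theorem]
  simp [Unitary.conjStarAlgAut_apply]

theorem transU_apply (τ : ℝ) (u v : N) :
    transU M τ u v = ∑ k, ((hM.eigenvectorBasis k u * hM.eigenvectorBasis k v : ℝ) : ℂ) *
      Complex.exp ((τ * hM.eigenvalues k : ℝ) * Complex.I) := by
  set U : Matrix N N ℝ := ↑hM.eigenvectorUnitary
  set Uc : Matrix N N ℂ := Complex.ofRealHom.mapMatrix U
  have hstar : Complex.ofRealHom.mapMatrix (star U) = star Uc := by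
    ext i j
    simp [Uc, star_apply]
  have hUc : Uc * star Uc = 1 := by
    rw [← hstar, ← map_mul, ← Unitary.coe_star, Unitary.coe_mul_star_self, map_one]
  have hinv : Uc⁻¹ = star Uc := inv_eq_right_inv hUc
  have hunit : IsUnit Uc := ⟨⟨Uc, star Uc, hUc, mul_eq_one_comm.mp hUc⟩, rfl⟩
  have hconj : (Complex.I * τ) • M.map (fun x : ℝ => (x : ℂ)) =
      Uc * diagonal (fun k => Complex.I * τ * hM.eigenvalues k) * Uc⁻¹ := by
    have hMc := congrArg Complex.ofRealHom.mapMatrix hM.eq_eigenvectorUnitary_mul_diagonal_mul_star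
    have hdiag : Complex.ofRealHom.mapMatrix (diagonal hM.eigenvalues) =
        diagonal (fun k => (hM.eigenvalues k : ℂ)) := diagonal_map (map_zero _)
    rw [map_mul, map_mul, hstar, hdiag] at hMc
    change (Complex.I * τ) • Complex.ofRealHom.mapMatrix M = _
    rw [hMc, hinv, ← smul_mul, ← Matrix.mul_smul, ← diagonal_smul]
    rfl
  rw [transU, hconj, exp_conj _ _ hunit, exp_diagonal, hinv, mul_apply]
  refine Finset.sum_congr rfl fun k _ => ?_
  simp only [Uc, U, RingHom.mapMatrix_apply, mul_diagonal, map_apply, eigenvectorUnitary_apply,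
    Complex.ofRealHom_eq_coe, Pi.coe_exp, ← Complex.exp_eq_exp_ℂ, star_apply, RCLike.star_def,
    Complex.conj_ofReal, Complex.ofReal_mul]
  ring_nf

variable {u : N}

theorem exp_eq_of_periodicAt (hP : PeriodicAt M u) :
    ∃ τ > 0, ∀ lam ∈ eigSupport M u, ∀ mu ∈ eigSupport M u,
      Complex.exp ((τ * lam : ℝ) * Complex.I) = Complex.exp ((τ * mu : ℝ) * Complex.I) := by
  obtain ⟨τ, hτ, hU⟩ := hP
  have hsum : transU M τ u u = ∑ k, hM.eigenvectorBasis k u ^ 2 •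
      Complex.exp ((τ * hM.eigenvalues k : ℝ) * Complex.I) := by
    simp [hM.transU_apply, Complex.real_smul, sq]
  have hphase : ∀ k, hM.eigenvectorBasis k u ≠ 0 →
      Complex.exp ((τ * hM.eigenvalues k : ℝ) * Complex.I) = transU M τ u u := fun k hk =>
    hsum ▸ eq_sum_smul_of_norm_sum_smul_eq_one (fun _ => sq_nonneg _)
      (hM.sum_eigenvectorBasis_apply_sq u) (fun _ => (Complex.norm_exp_ofReal_mul_I _).le)
      (hsum ▸ hU) (pow_ne_zero 2 hk)
  refine ⟨τ, hτ, fun lam hlam mu hmu => ?_⟩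
  obtain ⟨k, rfl, hk⟩ := hM.mem_eigSupport_iff.mp hlam
  obtain ⟨l, rfl, hl⟩ := hM.mem_eigSupport_iff.mp hmu
  rw [hphase k hk, hphase l hl]

theorem periodicAt_of_exp_eq_one {τ : ℝ} (hτ : 0 < τ)
    (h : ∀ lam ∈ eigSupport M u, Complex.exp ((τ * lam : ℝ) * Complex.I) = 1) :
    PeriodicAt M u := by
  refine ⟨τ, hτ, ?_⟩
  have hterm : ∀ k, ((hM.eigenvectorBasis k u * hM.eigenvectorBasis k u : ℝ) : ℂ) *
      Complex.exp ((τ * hM.eigenvalues k : ℝ) * Complex.I) = (hM.eigenvectorBasis k u ^ 2 : ℝ) := by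
    intro k
    by_cases hk : hM.eigenvectorBasis k u = 0
    · simp [hk]
    · rw [h _ (hM.mem_eigSupport_iff.mpr ⟨k, rfl, hk⟩), mul_one, sq]
  rw [hM.transU_apply, Finset.sum_congr rfl fun k _ => hterm k, ← Complex.ofReal_sum,
    hM.sum_eigenvectorBasis_apply_sq, Complex.ofReal_one, norm_one]

theorem periodicAt_of_forall_rat (h : ∀ lam ∈ eigSupport M u, ∃ q : ℚ, lam = q) :
    PeriodicAt M u := by
  obtain ⟨D, hD, hDint⟩ := exists_nat_mul_eq_int_of_finite (hM.eigSupport_finite u) h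
  refine hM.periodicAt_of_exp_eq_one (τ := 2 * Real.pi * D) (by positivity) fun lam hlam => ?_
  obtain ⟨z, hz⟩ := hDint lam hlam
  exact Complex.exp_ofReal_mul_I_eq_one_iff.mpr ⟨z, by rw [mul_assoc, hz]⟩

end Matrix.IsHermitian

section Laplacian

variable {N : Type*} [Fintype N] {L : Matrix N N ℝ}

theorem mulVec_const_eq_zero (hrow : ∀ i, ∑ j, L i j = 0) (c : ℝ) : L *ᵥ (fun _ => c) = 0 := by
  ext i
  simp [mulVec, dotProduct, ← Finset.sum_mul, hrow]

theorem zero_mem_eigSupport (hrow : ∀ i, ∑ j, L i j = 0) (u : N) : 0 ∈ eigSupport L u :=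
  ⟨fun _ => 1, fun h => one_ne_zero (congrFun h u), by rw [mulVec_const_eq_zero hrow, zero_smul],
    one_ne_zero⟩

theorem sum_mulVec_eq_zero (hsymm : L.IsSymm) (hrow : ∀ i, ∑ j, L i j = 0) (w : N → ℝ) :
    ∑ i, (L *ᵥ w) i = 0 := by
  simp only [mulVec, dotProduct]
  rw [Finset.sum_comm]
  simp [← Finset.sum_mul, hsymm.apply, hrow]

theorem sum_eq_zero_of_mulVec_eq_smul (hsymm : L.IsSymm) (hrow : ∀ i, ∑ j, L i j = 0)
    {w : N → ℝ} {lam : ℝ} (hw : L *ᵥ w = lam • w) (hlam : lam ≠ 0) : ∑ i, w i = 0 := by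
  have h := sum_mulVec_eq_zero hsymm hrow w
  simp only [hw, Pi.smul_apply, smul_eq_mul, ← Finset.mul_sum] at h
  exact (mul_eq_zero.mp h).resolve_left hlam

end Laplacian

section Join

variable {m n : ℕ} {LX : Matrix (Fin m) (Fin m) ℝ} {LY : Matrix (Fin n) (Fin n) ℝ}

theorem joinL_isSymm (hX : LX.IsSymm) (hY : LY.IsSymm) : (joinL m n LX LY).IsSymm := by
  refine IsSymm.fromBlocks (hX.add (isSymm_one.smul _)) ?_ (hY.add (isSymm_one.smul _))
  ext i j
  rfl

theorem sum_joinL_eq_zero (hX : ∀ i, ∑ j, LX i j = 0) (hY : ∀ i, ∑ j, LY i j = 0) :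
    ∀ i, ∑ j, joinL m n LX LY i j = 0 := by
  rintro (i | i) <;>
    simp [joinL, Fintype.sum_sum_type, one_apply, Finset.sum_add_distrib, hX, hY]

theorem joinL_mulVec_inl (W : Fin m ⊕ Fin n → ℝ) (i : Fin m) :
    (joinL m n LX LY *ᵥ W) (Sum.inl i) =
      (LX *ᵥ fun j => W (Sum.inl j)) i + n * W (Sum.inl i) - ∑ j, W (Sum.inr j) := by
  simp [joinL, mulVec, dotProduct, Fintype.sum_sum_type, add_mul, one_apply,
    Finset.sum_add_distrib, sub_eq_add_neg, mul_comm, add_comm]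

theorem joinL_mulVec_inr (W : Fin m ⊕ Fin n → ℝ) (i : Fin n) :
    (joinL m n LX LY *ᵥ W) (Sum.inr i) =
      (LY *ᵥ fun j => W (Sum.inr j)) i + m * W (Sum.inr i) - ∑ j, W (Sum.inl j) := by
  simp [joinL, mulVec, dotProduct, Fintype.sum_sum_type, add_mul, one_apply,
    Finset.sum_add_distrib, sub_eq_add_neg, mul_comm, add_comm]

theorem sum_joinL_mulVec_inl (hXsymm : LX.IsSymm) (hX : ∀ i, ∑ j, LX i j = 0)
    (W : Fin m ⊕ Fin n → ℝ) :
    ∑ i, (joinL m n LX LY *ᵥ W) (Sum.inl i) =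
      n * ∑ i, W (Sum.inl i) - m * ∑ j, W (Sum.inr j) := by
  simp [joinL_mulVec_inl, Finset.sum_sub_distrib, Finset.sum_add_distrib,
    sum_mulVec_eq_zero hXsymm hX, Finset.mul_sum]

theorem sum_joinL_mulVec_inr (hYsymm : LY.IsSymm) (hY : ∀ i, ∑ j, LY i j = 0)
    (W : Fin m ⊕ Fin n → ℝ) :
    ∑ j, (joinL m n LX LY *ᵥ W) (Sum.inr j) =
      m * ∑ j, W (Sum.inr j) - n * ∑ i, W (Sum.inl i) := by
  simp [joinL_mulVec_inr, Finset.sum_sub_distrib, Finset.sum_add_distrib,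
    sum_mulVec_eq_zero hYsymm hY, Finset.mul_sum]

theorem natCast_add_mem_eigSupport_joinL (hX : ∀ i, ∑ j, LX i j = 0)
    (hY : ∀ i, ∑ j, LY i j = 0) (hn : 0 < n) (u : Fin m) :
    (m + n : ℝ) ∈ eigSupport (joinL m n LX LY) (Sum.inl u) := by
  have hn' : (n : ℝ) ≠ 0 := by exact_mod_cast hn.ne'
  refine ⟨Sum.elim (fun _ => (n : ℝ)) (fun _ => -(m : ℝ)),
    fun h => hn' (congrFun h (Sum.inl u)), ?_, hn'⟩
  ext (i | i)
  · rw [joinL_mulVec_inl]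
    simp only [Sum.elim_inl, Sum.elim_inr, mulVec_const_eq_zero hX, Pi.zero_apply, Finset.sum_const,
      Finset.card_univ, Fintype.card_fin, nsmul_eq_mul, Pi.smul_apply, smul_eq_mul]
    ring
  · rw [joinL_mulVec_inr]
    simp only [Sum.elim_inl, Sum.elim_inr, mulVec_const_eq_zero hY, Pi.zero_apply, Finset.sum_const,
      Finset.card_univ, Fintype.card_fin, nsmul_eq_mul, Pi.smul_apply, smul_eq_mul]
    ring

theorem add_mem_eigSupport_joinL (hXsymm : LX.IsSymm) (hX : ∀ i, ∑ j, LX i j = 0) {u : Fin m}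
    {lam : ℝ} (hlam : lam ∈ eigSupport LX u) (hlam0 : lam ≠ 0) :
    lam + n ∈ eigSupport (joinL m n LX LY) (Sum.inl u) := by
  obtain ⟨w, -, hw, hwu⟩ := hlam
  have hsum := sum_eq_zero_of_mulVec_eq_smul hXsymm hX hw hlam0
  refine ⟨Sum.elim w 0, fun h => hwu (congrFun h (Sum.inl u)), ?_, hwu⟩
  ext (i | i)
  · simp only [joinL_mulVec_inl, Sum.elim_inl, Sum.elim_inr, hw, Pi.smul_apply, smul_eq_mul,
      Pi.zero_apply, Finset.sum_const_zero, sub_zero]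
    ring
  · rw [joinL_mulVec_inr]
    simp [mulVec, dotProduct, hsum]

theorem sub_mem_eigSupport_of_mem_eigSupport_joinL (hXsymm : LX.IsSymm)
    (hX : ∀ i, ∑ j, LX i j = 0) (hYsymm : LY.IsSymm) (hY : ∀ i, ∑ j, LY i j = 0) {u : Fin m}
    {mu : ℝ} (hmu : mu ∈ eigSupport (joinL m n LX LY) (Sum.inl u)) (h0 : mu ≠ 0)
    (hmn : mu ≠ m + n) : mu - n ∈ eigSupport LX u := by
  obtain ⟨W, -, hW, hWu⟩ := hmu
  set sX := ∑ i, W (Sum.inl i)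
  set sY := ∑ j, W (Sum.inr j) with hsY_def
  -- Summing the eigenvalue equation over each side of the join shows that `W` sums to zero on `Y`.
  have hsX : mu * sX = n * sX - m * sY := by
    rw [← sum_joinL_mulVec_inl hXsymm hX, hW]
    simp [sX, Finset.mul_sum]
  have hsY : mu * sY = m * sY - n * sX := by
    rw [← sum_joinL_mulVec_inr hYsymm hY, hW]
    simp [sY, Finset.mul_sum]
  have hsXY : sX + sY = 0 :=
    (mul_eq_zero.mp (by linear_combination hsX + hsY : mu * (sX + sY) = 0)).resolve_left h0
  have hsY0 : sY = 0 :=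
    (mul_eq_zero.mp (by linear_combination hsY - n * hsXY : (mu - (m + n)) * sY = 0)).resolve_left
      (sub_ne_zero.mpr hmn)
  refine ⟨fun i => W (Sum.inl i), fun h => hWu (congrFun h u), ?_, hWu⟩
  ext i
  have hi := congrFun hW (Sum.inl i)
  rw [joinL_mulVec_inl, ← hsY_def, hsY0] at hi
  simp only [Pi.smul_apply, smul_eq_mul] at hi ⊢
  linarith

theorem forall_rat_eigSupport_of_periodicAt_joinL (hXsymm : LX.IsSymm)
    (hX : ∀ i, ∑ j, LX i j = 0) (hYsymm : LY.IsSymm) (hY : ∀ i, ∑ j, LY i j = 0) (hn : 0 < n)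
    {u : Fin m} (hP : PeriodicAt (joinL m n LX LY) (Sum.inl u)) :
    ∀ lam ∈ eigSupport LX u, ∃ q : ℚ, lam = q := by
  obtain ⟨τ, hτ, hexp⟩ :=
    (isHermitian_iff_isSymm.mpr (joinL_isSymm hXsymm hYsymm)).exp_eq_of_periodicAt hP
  have hphase : ∀ mu ∈ eigSupport (joinL m n LX LY) (Sum.inl u),
      Complex.exp ((τ * mu : ℝ) * Complex.I) = 1 := fun mu hmu => by
    simpa using hexp mu hmu 0 (zero_mem_eigSupport (sum_joinL_eq_zero hX hY) _)
  intro lam hlam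
  rcases eq_or_ne lam 0 with rfl | hlam0
  · exact ⟨0, by simp⟩
  obtain ⟨r, hr⟩ := exists_rat_eq_of_exp_mul_I_eq_one hτ.ne' (q := m + n) (by push_cast; rfl)
    (by exact_mod_cast (Nat.add_pos_right m hn).ne')
    (hphase _ (add_mem_eigSupport_joinL hXsymm hX hlam hlam0))
    (hphase _ (natCast_add_mem_eigSupport_joinL hX hY hn u))
  exact ⟨r - n, by push_cast; linarith⟩

theorem forall_rat_eigSupport_joinL_of_forall_rat (hXsymm : LX.IsSymm)
    (hX : ∀ i, ∑ j, LX i j = 0) (hYsymm : LY.IsSymm) (hY : ∀ i, ∑ j, LY i j = 0) {u : Fin m}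
    (h : ∀ lam ∈ eigSupport LX u, ∃ q : ℚ, lam = q) :
    ∀ mu ∈ eigSupport (joinL m n LX LY) (Sum.inl u), ∃ q : ℚ, mu = q := by
  intro mu hmu
  by_cases h0 : mu = 0
  · exact ⟨0, by simp [h0]⟩
  by_cases hmn : mu = m + n
  · exact ⟨m + n, by simp [hmn]⟩
  obtain ⟨q, hq⟩ := h _ (sub_mem_eigSupport_of_mem_eigSupport_joinL hXsymm hX hYsymm hY hmu h0 hmn)
  exact ⟨q + n, by push_cast; linarith⟩

end Join

theorem stmt5_general (m n : ℕ) (hn : 1 ≤ n)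
    (LX : Matrix (Fin m) (Fin m) ℝ) (LY : Matrix (Fin n) (Fin n) ℝ)
    (hLXsymm : LX.IsSymm) (hLXrow : ∀ i, ∑ j, LX i j = 0)
    (hLYsymm : LY.IsSymm) (hLYrow : ∀ i, ∑ j, LY i j = 0) (u : Fin m) :
    (PeriodicAt (joinL m n LX LY) (Sum.inl u) ↔
        ∀ lam ∈ eigSupport LX u, ∃ q : ℚ, lam = (q : ℝ)) ∧
      (PeriodicAt (joinL m n LX LY) (Sum.inl u) → PeriodicAt LX u) := by
  have hJ := isHermitian_iff_isSymm.mpr (joinL_isSymm hLXsymm hLYsymm)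
  have hX := isHermitian_iff_isSymm.mpr hLXsymm
  have hrat := forall_rat_eigSupport_of_periodicAt_joinL hLXsymm hLXrow hLYsymm hLYrow hn (u := u)
  refine ⟨⟨hrat, fun h => hJ.periodicAt_of_forall_rat ?_⟩,
    fun hP => hX.periodicAt_of_forall_rat (hrat hP)⟩
  exact forall_rat_eigSupport_joinL_of_forall_rat hLXsymm hLXrow hLYsymm hLYrow h

theorem stmt5 (m n : ℕ) (hm : 1 ≤ m) (hn : 1 ≤ n)
    (LX : Matrix (Fin m) (Fin m) ℝ) (LY : Matrix (Fin n) (Fin n) ℝ)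
    (hLXsymm : LX.IsSymm) (hLXrow : ∀ i, ∑ j, LX i j = 0)
    (hLYsymm : LY.IsSymm) (hLYrow : ∀ i, ∑ j, LY i j = 0) (u : Fin m) :
    (PeriodicAt (joinL m n LX LY) (Sum.inl u) ↔
        ∀ lam ∈ eigSupport LX u, ∃ q : ℚ, lam = (q : ℝ)) ∧
      (PeriodicAt (joinL m n LX LY) (Sum.inl u) → PeriodicAt LX u) :=
  stmt5_general m n hn LX LY hLXsymm hLXrow hLYsymm hLYrow u
end

section
/- Let m ≥ 2, u ∈ {1,…,m} and w ∈ {1,…,n}. Then the vertices u of X and m+w of Y are not strongly cospectral with respect to L. -/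
open Matrix Complex

/-!
An eigenvector `x` of `L_X` orthogonal to the all-ones vector, extended by zero on `Y`, is an
eigenvector of the join Laplacian, with eigenvalue shifted by `n`. Such an eigenvector has
nonzero `u`-entry but zero `(m + w)`-entry, so it violates both alternatives of strong
cospectrality. It exists because `L_X` preserves `𝟙ᗮ`, and the eigenvectors of its restriction
there span `𝟙ᗮ`, which contains `e_u - e_{u'}` for any vertex `u' ≠ u` of `X`.
-/

theorem LinearMap.IsSymmetric.exists_eigenvector_mem_apply_ne_zero {𝕜 E F : Type*} [RCLike 𝕜]
    [NormedAddCommGroup E] [InnerProductSpace 𝕜 E] [FiniteDimensional 𝕜 E]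
    [AddCommGroup F] [Module 𝕜 F]
    {T : E →ₗ[𝕜] E} (hT : T.IsSymmetric) {V : Submodule 𝕜 E} (hV : ∀ v ∈ V, T v ∈ V)
    (f : E →ₗ[𝕜] F) {v : E} (hvV : v ∈ V) (hv : f v ≠ 0) :
    ∃ (μ : 𝕜) (x : E), x ∈ V ∧ T x = μ • x ∧ f x ≠ 0 := by
  by_contra! h
  let b := (hT.restrict_invariant hV).eigenvectorBasis rfl
  have hfV : f ∘ₗ V.subtype = 0 := b.toBasis.ext fun i => by
    simpa using h _ _ (b i).2
      (congrArg Subtype.val ((hT.restrict_invariant hV).apply_eigenvectorBasis rfl i))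
  exact hv (by simpa using LinearMap.congr_fun hfV ⟨v, hvV⟩)

theorem Matrix.exists_eigenvector_sum_eq_zero_apply_ne_zero {ι : Type*} [Fintype ι]
    [DecidableEq ι] [Nontrivial ι] {A : Matrix ι ι ℝ} (hA : A.IsSymm)
    (hrow : ∀ i, ∑ j, A i j = 0) (u : ι) :
    ∃ (μ : ℝ) (x : ι → ℝ), A *ᵥ x = μ • x ∧ ∑ k, x k = 0 ∧ x u ≠ 0 := by
  have hones : A *ᵥ 1 = 0 := funext fun i => by simpa [mulVec, dotProduct] using hrow i
  have hsum_mulVec (x : ι → ℝ) : ∑ k, (A *ᵥ x) k = 0 := by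
    rw [← one_dotProduct, dotProduct_mulVec, ← hA.eq, vecMul_transpose, hones, zero_dotProduct]
  let s : EuclideanSpace ℝ ι →ₗ[ℝ] ℝ := ∑ k, (EuclideanSpace.proj k).toLinearMap
  have hs (x : EuclideanSpace ℝ ι) : s x = ∑ k, x k := by simp [s]
  have hT : (toEuclideanLin A).IsSymmetric :=
    isSymmetric_toEuclideanLin_iff.mpr (isHermitian_iff_isSymm.mpr hA)
  obtain ⟨u', hu'⟩ := exists_ne u
  obtain ⟨μ, x, hxs, hx, hxu⟩ := hT.exists_eigenvector_mem_apply_ne_zero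
    (V := LinearMap.ker s) (fun x _ => by simp [hs, hsum_mulVec])
    (EuclideanSpace.proj u).toLinearMap
    (v := EuclideanSpace.single u 1 - EuclideanSpace.single u' 1) (by simp [hs])
    (by simp [hu'.symm])
  exact ⟨μ, x.ofLp, congrArg WithLp.ofLp hx, by simpa [hs] using hxs, hxu⟩

theorem joinL_mulVec_sumElim_zero {m n : ℕ} (LX : Matrix (Fin m) (Fin m) ℝ)
    (LY : Matrix (Fin n) (Fin n) ℝ) {μ : ℝ} {x : Fin m → ℝ} (hx : LX *ᵥ x = μ • x)
    (hsum : ∑ k, x k = 0) :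
    joinL m n LX LY *ᵥ Sum.elim x 0 = (μ + n) • Sum.elim x 0 := by
  have hJx : (of fun _ _ => (1 : ℝ) : Matrix (Fin n) (Fin m) ℝ) *ᵥ x = 0 :=
    funext fun _ => by simpa [mulVec, dotProduct] using hsum
  rw [joinL, fromBlocks_mulVec, Sum.elim_comp_inl, Sum.elim_comp_inr]
  ext (k | k)
  · simp only [add_mulVec, smul_mulVec, one_mulVec, hx, mulVec_zero, Sum.elim_inl,
      Pi.add_apply, Pi.smul_apply, Pi.zero_apply, smul_eq_mul]
    ring
  · simp only [neg_mulVec, hJx, mulVec_zero, Sum.elim_inr, Pi.add_apply, Pi.neg_apply,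
      Pi.zero_apply, Pi.smul_apply, smul_eq_mul]
    ring

theorem not_stronglyCospectral_of_mulVec_eq {N : Type*} [Fintype N] {M : Matrix N N ℝ}
    {u v : N} {μ : ℝ} {w : N → ℝ} (hw : M *ᵥ w = μ • w) (hu : w u ≠ 0) (hv : w v = 0) :
    ¬ StronglyCospectral M u v := by
  intro hsc
  have hw0 : w ≠ 0 := fun h => hu (by simp [h])
  rcases hsc μ ⟨w, hw0, hw⟩ with h | h
  · exact hu ((h w hw).trans hv)
  · exact hu ((h w hw).trans (by simp [hv]))

theorem stmt11_general (m n : ℕ) (hm : 2 ≤ m)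
    (LX : Matrix (Fin m) (Fin m) ℝ) (LY : Matrix (Fin n) (Fin n) ℝ)
    (hLXsymm : LX.IsSymm) (hLXrow : ∀ i, ∑ j, LX i j = 0)
    (u : Fin m) (w : Fin n) :
    ¬ StronglyCospectral (joinL m n LX LY) (Sum.inl u) (Sum.inr w) := by
  have : Nontrivial (Fin m) := Fin.nontrivial_iff_two_le.mpr hm
  obtain ⟨μ, x, hx, hsum, hxu⟩ := exists_eigenvector_sum_eq_zero_apply_ne_zero hLXsymm hLXrow u
  exact not_stronglyCospectral_of_mulVec_eq (joinL_mulVec_sumElim_zero LX LY hx hsum) hxu rfl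

theorem stmt11 (m n : ℕ) (hm : 2 ≤ m) (hn : 1 ≤ n)
    (LX : Matrix (Fin m) (Fin m) ℝ) (LY : Matrix (Fin n) (Fin n) ℝ)
    (hLXsymm : LX.IsSymm) (hLXrow : ∀ i, ∑ j, LX i j = 0)
    (hLXoffdiag : ∀ i j, i ≠ j → LX i j ≤ 0)
    (hLYsymm : LY.IsSymm) (hLYrow : ∀ i, ∑ j, LY i j = 0)
    (hLYoffdiag : ∀ i j, i ≠ j → LY i j ≤ 0)
    (u : Fin m) (w : Fin n) :
    ¬ StronglyCospectral (joinL m n LX LY) (Sum.inl u) (Sum.inr w) :=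
  stmt11_general m n hm LX LY hLXsymm hLXrow u w
end
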